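/- arXiv:1609.09566 — 3 statements merged into one kernel-verified Lean document; each statement's English description precedes it below -/
import Mathlib

section
/- Let β₀ < α_k < β_k be real numbers with α_k - β₀ ≤ β_k - α_k. Then ∫_{β₀}^{α_k} dt/√((t-β₀)(α_k-t)(β_k-t)) ≤ √2·π/√(x-β₀) for every x ∈ (α_k, β_k). -/
open Real MeasureTheory intervalIntegral Set

lemma rpow_neg_half_eq (x : ℝ) (hx : 0 ≤ x) : x ^ (-(1/2) : ℝ) = (Real.sqrt x)⁻¹ := by
  rw [Real.rpow_neg hx, ← Real.sqrt_eq_rpow]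

lemma bound_left (a b t : ℝ) (hta : 0 < t - a) (htb : (b - a) / 2 ≤ b - t) :
    1 / Real.sqrt ((t - a) * (b - t)) ≤
      ((b - a) / 2) ^ (-(1/2) : ℝ) * (t - a) ^ (-(1/2) : ℝ) := by
  have hC : (0:ℝ) < (b - a) / 2 := by linarith
  rw [rpow_neg_half_eq _ hC.le, rpow_neg_half_eq _ hta.le, Real.sqrt_mul hta.le]
  rw [← mul_inv, one_div]
  apply inv_anti₀
  · positivity
  · rw [mul_comm (Real.sqrt ((b - a) / 2))]
    exact mul_le_mul_of_nonneg_left (Real.sqrt_le_sqrt htb) (Real.sqrt_nonneg _)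

lemma bound_right (a b t : ℝ) (htb : 0 < b - t) (hta : (b - a) / 2 ≤ t - a) :
    1 / Real.sqrt ((t - a) * (b - t)) ≤
      ((b - a) / 2) ^ (-(1/2) : ℝ) * (b - t) ^ (-(1/2) : ℝ) := by
  have hC : (0:ℝ) < (b - a) / 2 := by linarith
  rw [rpow_neg_half_eq _ hC.le, rpow_neg_half_eq _ htb.le,
    Real.sqrt_mul (by linarith : (0:ℝ) ≤ t - a)]
  rw [← mul_inv, one_div]
  apply inv_anti₀
  · positivity
  · exact mul_le_mul_of_nonneg_right (Real.sqrt_le_sqrt hta) (Real.sqrt_nonneg _)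

lemma aux_sqrt_int (a b : ℝ) (hab : a < b) :
    IntervalIntegrable (fun t => 1 / Real.sqrt ((t - a) * (b - t))) volume a b := by
  have hm : a < (a + b) / 2 := by linarith
  have hm' : (a + b) / 2 < b := by linarith
  have hmeas : ∀ c d : ℝ, AEStronglyMeasurable (fun t => 1 / Real.sqrt ((t - a) * (b - t)))
      (volume.restrict (Set.uIoc c d)) := by
    intro c d
    apply Measurable.aestronglyMeasurable
    exact Measurable.div measurable_const
      (Real.continuous_sqrt.comp (by continuity)).measurable
  apply IntervalIntegrable.trans (b := (a + b) / 2)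
  · have h0 : IntervalIntegrable (fun x : ℝ => x ^ (-(1/2) : ℝ)) volume 0 ((a + b)/2 - a) :=
      intervalIntegrable_rpow' (by norm_num)
    have hint := (h0.comp_sub_right a).const_mul (((b - a) / 2) ^ (-(1/2) : ℝ))
    simp only [zero_add, sub_add_cancel] at hint
    refine hint.mono_fun (hmeas _ _) ?_
    refine (MeasureTheory.ae_restrict_mem measurableSet_uIoc).mono fun t ht => ?_
    rw [Set.uIoc_of_le hm.le, Set.mem_Ioc] at ht
    have hta : 0 < t - a := by linarith [ht.1]
    have htb : (b - a) / 2 ≤ b - t := by linarith [ht.2]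
    have hC : (0:ℝ) < (b - a) / 2 := by linarith
    simp only [Real.norm_eq_abs]
    rw [abs_of_nonneg (by positivity), abs_of_nonneg (by positivity)]
    exact bound_left a b t hta htb
  · have h0 : IntervalIntegrable (fun x : ℝ => x ^ (-(1/2) : ℝ)) volume 0 (b - (a + b)/2) :=
      intervalIntegrable_rpow' (by norm_num)
    have hint := ((h0.comp_sub_left b).const_mul (((b - a) / 2) ^ (-(1/2) : ℝ))).symm
    simp only [sub_zero, sub_sub_cancel] at hint
    refine hint.mono_fun (hmeas _ _) ?_
    refine (MeasureTheory.ae_restrict_mem measurableSet_uIoc).mono fun t ht => ?_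
    rw [Set.uIoc_of_le hm'.le, Set.mem_Ioc] at ht
    rcases ht.2.lt_or_eq with hlt | heq
    · have htb : 0 < b - t := by linarith
      have hta : (b - a) / 2 ≤ t - a := by linarith [ht.1]
      have hC : (0:ℝ) < (b - a) / 2 := by linarith
      simp only [Real.norm_eq_abs]
      rw [abs_of_nonneg (by positivity),
        abs_of_nonneg (mul_nonneg (Real.rpow_nonneg hC.le _) (Real.rpow_nonneg htb.le _))]
      exact bound_right a b t htb hta
    · rw [heq]
      simp [Real.zero_rpow (by norm_num : (-(1/2) : ℝ) ≠ 0)]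

lemma aux_sqrt_integral (a b : ℝ) (hab : a < b) :
    ∫ t in a..b, 1 / Real.sqrt ((t - a) * (b - t)) = Real.pi := by
  have hba : (0:ℝ) < b - a := by linarith
  set F : ℝ → ℝ := fun t => Real.arcsin ((2*t - a - b) / (b - a)) with hF
  have hcont : ContinuousOn F (Set.Icc a b) :=
    (Real.continuous_arcsin.comp (by continuity)).continuousOn
  have hderiv : ∀ t ∈ Set.Ioo a b, HasDerivWithinAt F
      (1 / Real.sqrt ((t - a) * (b - t))) (Set.Ioi t) t := by
    intro t ht
    obtain ⟨hta, htb⟩ := ht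
    set u : ℝ := (2*t - a - b) / (b - a) with hu
    have hu1 : -1 < u := by
      rw [hu, lt_div_iff₀ hba]; linarith
    have hu2 : u < 1 := by
      rw [hu, div_lt_iff₀ hba]; linarith
    have hinner : HasDerivAt (fun t : ℝ => (2*t - a - b) / (b - a)) (2 / (b - a)) t := by
      have : HasDerivAt (fun t : ℝ => 2*t - a - b) 2 t := by
        simpa using (((hasDerivAt_id t).const_mul 2).sub_const a).sub_const b
      simpa using this.div_const (b - a)
    have harc := (Real.hasDerivAt_arcsin (ne_of_gt hu1) (ne_of_lt hu2)).comp t hinner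
    have hval : 1 / Real.sqrt (1 - u ^ 2) * (2 / (b - a)) =
        1 / Real.sqrt ((t - a) * (b - t)) := by
      have h1u : 1 - u ^ 2 = 4 * ((t - a) * (b - t)) / (b - a) ^ 2 := by
        have hne : b - a ≠ 0 := sub_ne_zero.mpr hab.ne'
        rw [hu, div_pow, eq_div_iff (pow_ne_zero 2 hne), sub_mul,
          div_mul_cancel₀ _ (pow_ne_zero 2 hne)]
        ring
      have hpos : 0 < (t - a) * (b - t) :=
        mul_pos (by linarith) (by linarith)
      have hne : b - a ≠ 0 := sub_ne_zero.mpr hab.ne'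
      rw [h1u, show (4 : ℝ) * ((t - a) * (b - t)) / (b - a) ^ 2 =
          (2 / (b - a)) ^ 2 * ((t - a) * (b - t)) by rw [div_pow]; ring,
        Real.sqrt_mul (sq_nonneg (2 / (b - a))) ((t - a) * (b - t)),
        Real.sqrt_sq (div_nonneg (by norm_num) (by linarith))]
      have hs : 0 < Real.sqrt ((t - a) * (b - t)) := Real.sqrt_pos.mpr hpos
      field_simp
    rw [← hval]
    exact harc.hasDerivWithinAt
  have hint := aux_sqrt_int a b hab
  have := intervalIntegral.integral_eq_sub_of_hasDeriv_right_of_le hab.le hcont hderiv hint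
  rw [this, hF]
  have h1 : (2*b - a - b) / (b - a) = 1 := by
    rw [show 2*b - a - b = b - a by ring, div_self (sub_ne_zero.mpr hab.ne')]
  have h2 : (2*a - a - b) / (b - a) = -1 := by rw [div_eq_iff (ne_of_gt hba)]; ring
  simp only [h1, h2, Real.arcsin_one, Real.arcsin_neg_one]
  ring

/-- Elliptic-type integral estimate: if `β₀ < αk < βk` with `αk - β₀ ≤ βk - αk`, then
`∫_{β₀}^{αk} dt/√((t-β₀)(αk-t)(βk-t)) ≤ √2·π/√(x-β₀)` for every `x ∈ (αk, βk)`. -/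
theorem elliptic_integral_estimate_short_band (β₀ αk βk x : ℝ)
    (h1 : β₀ < αk) (h2 : αk < βk) (h3 : αk - β₀ ≤ βk - αk)
    (hx : x ∈ Set.Ioo αk βk) :
    ∫ t in β₀..αk, 1 / Real.sqrt ((t - β₀) * (αk - t) * (βk - t)) ≤
      Real.sqrt 2 * Real.pi / Real.sqrt (x - β₀) := by
  obtain ⟨hx1, hx2⟩ := hx
  have hxb : 0 < x - β₀ := by linarith
  have hK : 0 < Real.sqrt (βk - αk) := Real.sqrt_pos.mpr (by linarith)
  by_cases hf : IntervalIntegrable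
      (fun t => 1 / Real.sqrt ((t - β₀) * (αk - t) * (βk - t))) volume β₀ αk
  · set K := Real.sqrt (βk - αk) with hKdef
    have hg : IntervalIntegrable (fun t => K⁻¹ * (1 / Real.sqrt ((t - β₀) * (αk - t))))
        volume β₀ αk := (aux_sqrt_int β₀ αk h1).const_mul _
    have hmono : ∀ t ∈ Set.Icc β₀ αk,
        1 / Real.sqrt ((t - β₀) * (αk - t) * (βk - t)) ≤
          K⁻¹ * (1 / Real.sqrt ((t - β₀) * (αk - t))) := by
      intro t ⟨hta, htb⟩
      have hab : 0 ≤ (t - β₀) * (αk - t) := mul_nonneg (by linarith) (by linarith)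
      have hc : βk - αk ≤ βk - t := by linarith
      rw [Real.sqrt_mul hab]
      rcases eq_or_lt_of_le (Real.sqrt_nonneg ((t - β₀) * (αk - t))) with h0 | h0
      · rw [← h0]; simp
      · have hcpos : 0 < Real.sqrt (βk - t) :=
          Real.sqrt_pos.mpr (by linarith)
        have hrhs : K⁻¹ * (1 / Real.sqrt ((t - β₀) * (αk - t))) =
            (Real.sqrt ((t - β₀) * (αk - t)) * K)⁻¹ := by
          rw [one_div, mul_inv]; ring
        rw [hrhs, one_div]
        exact inv_anti₀ (mul_pos h0 hK)
          (mul_le_mul_of_nonneg_left (Real.sqrt_le_sqrt hc) (Real.sqrt_nonneg _))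
    calc ∫ t in β₀..αk, 1 / Real.sqrt ((t - β₀) * (αk - t) * (βk - t))
        ≤ ∫ t in β₀..αk, K⁻¹ * (1 / Real.sqrt ((t - β₀) * (αk - t))) :=
          intervalIntegral.integral_mono_on h1.le hf hg hmono
      _ = K⁻¹ * Real.pi := by
          rw [intervalIntegral.integral_const_mul, aux_sqrt_integral β₀ αk h1]
      _ ≤ Real.sqrt 2 * Real.pi / Real.sqrt (x - β₀) := by
          have hxle : Real.sqrt (x - β₀) ≤ Real.sqrt 2 * K := by
            rw [← Real.sqrt_mul (by norm_num : (0:ℝ) ≤ 2)]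
            exact Real.sqrt_le_sqrt (by linarith)
          rw [inv_mul_eq_div, div_le_div_iff₀ hK (Real.sqrt_pos.mpr hxb)]
          nlinarith [Real.pi_pos]
  · rw [intervalIntegral.integral_undef hf]
    positivity
end

section
/- Let β₀ < α_k < β_k be real numbers with α_k - β₀ > β_k - α_k, and let x ∈ (α_k, β_k). Then ∫_{β₀}^{α_k} dt/√((t-β₀)(α_k-t)(β_k-t)) ≤ (2/√(x-β₀))·(2 + log 2 + log((β_k-β₀)/(β_k-α_k))). -/
/-!
Translate by `β₀` and put `a = αk - β₀`, `b = βk - β₀`; split `∫₀^a dt / √(t (a - t) (b - t))`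
at `a / 2`. On `[0, a/2]` the factor `(a - t)(b - t)` is at least `(a/2)²`, which leaves
`(2/a) ∫ dt/√t = 2 √(2/a)`. On `[a/2, a]` the factor `1/√t` is at most `√(2/a)`, and
`dt / √((a - t)(b - t))` has the antiderivative `-2 log (√(a - t) + √(b - t))`; at `t = a/2`,
`√(a/2) + √(b - a/2) ≤ √(2b)` bounds its integral by `log 2 + log (b / (b - a))`. Finally
`√(2/a) ≤ 2 / √(x - β₀)` since `x - β₀ < βk - β₀ < 2a`.
-/

open Real MeasureTheory intervalIntegral Set

theorem sqrt_add_sqrt_le_sqrt_two_mul {x y : ℝ} (hx : 0 ≤ x) (hy : 0 ≤ y) :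
    √x + √y ≤ √(2 * (x + y)) := by
  rw [le_sqrt (by positivity) (by positivity)]
  nlinarith [sq_sqrt hx, sq_sqrt hy, sq_nonneg (√x - √y)]

theorem IntervalIntegrable.of_nonneg_of_le_Ioo {f g : ℝ → ℝ} {u v : ℝ} (huv : u ≤ v)
    (hf : Measurable f) (hg : IntervalIntegrable g volume u v)
    (hf₀ : ∀ t ∈ Ioo u v, 0 ≤ f t) (hfg : ∀ t ∈ Ioo u v, f t ≤ g t) :
    IntervalIntegrable f volume u v := by
  refine hg.mono_fun' hf.aestronglyMeasurable ?_
  rw [uIoc_of_le huv, ← Measure.restrict_congr_set Ioo_ae_eq_Ioc]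
  refine (ae_restrict_iff' measurableSet_Ioo).2 (ae_of_all _ fun t ht => ?_)
  exact (norm_of_nonneg (hf₀ t ht)).trans_le (hfg t ht)

theorem integral_eq_sub_of_hasDerivAt_of_nonneg {F f : ℝ → ℝ} {u v : ℝ} (huv : u ≤ v)
    (hF : ContinuousOn F (Icc u v)) (hderiv : ∀ t ∈ Ioo u v, HasDerivAt F (f t) t)
    (hf : ∀ t ∈ Ioo u v, 0 ≤ f t) :
    IntervalIntegrable f volume u v ∧ ∫ t in u..v, f t = F v - F u := by
  have hint : IntervalIntegrable f volume u v := by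
    refine intervalIntegrable_deriv_of_nonneg (g := F) ?_ ?_ ?_ <;>
      simpa only [uIcc_of_le huv, min_eq_left huv, max_eq_right huv]
  exact ⟨hint, integral_eq_sub_of_hasDerivAt_of_le huv hF hderiv hint⟩

theorem integral_one_div_sqrt {c : ℝ} (hc : 0 ≤ c) :
    IntervalIntegrable (fun t => 1 / √t) volume 0 c ∧ ∫ t in 0..c, 1 / √t = 2 * √c := by
  have hderiv : ∀ t ∈ Ioo 0 c, HasDerivAt (fun s => 2 * √s) (1 / √t) t := fun t ht => by
    refine (((hasDerivAt_id' t).sqrt ht.1.ne').const_mul 2).congr_deriv ?_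
    field_simp
  simpa using integral_eq_sub_of_hasDerivAt_of_nonneg hc (by fun_prop) hderiv
    (fun t _ => by positivity)

theorem hasDerivAt_neg_two_mul_log_sqrt_add_sqrt {a b t : ℝ} (hta : t < a) (hab : a ≤ b) :
    HasDerivAt (fun s => -2 * log (√(a - s) + √(b - s))) (1 / √((a - t) * (b - t))) t := by
  have hat : 0 < a - t := by linarith
  have hbt : 0 < b - t := by linarith
  have hsum := ((hasDerivAt_id' t).const_sub a).sqrt hat.ne' |>.add
    (((hasDerivAt_id' t).const_sub b).sqrt hbt.ne')
  have hne : √(a - t) + √(b - t) ≠ 0 :=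
    (add_pos_of_pos_of_nonneg (sqrt_pos.2 hat) (sqrt_nonneg _)).ne'
  refine ((hsum.log hne).const_mul (-2)).congr_deriv ?_
  rw [Pi.add_apply, sqrt_mul hat.le]
  field_simp
  ring

theorem integral_one_div_sqrt_sub_mul_sub {a b c : ℝ} (hca : c ≤ a) (hab : a < b) :
    IntervalIntegrable (fun t => 1 / √((a - t) * (b - t))) volume c a ∧
      ∫ t in c..a, 1 / √((a - t) * (b - t)) =
        2 * log (√(a - c) + √(b - c)) - log (b - a) := by
  have hcont : ContinuousOn (fun s => -2 * log (√(a - s) + √(b - s))) (Icc c a) := by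
    refine continuousOn_const.mul (ContinuousOn.log (by fun_prop) fun t ht => ?_)
    exact (add_pos_of_nonneg_of_pos (sqrt_nonneg _) (sqrt_pos.2 (by linarith [ht.2]))).ne'
  obtain ⟨hint, heq⟩ := integral_eq_sub_of_hasDerivAt_of_nonneg hca hcont
    (fun t ht => hasDerivAt_neg_two_mul_log_sqrt_add_sqrt ht.2 hab.le)
    (fun t _ => by positivity)
  refine ⟨hint, heq.trans ?_⟩
  simp only [sub_self, sqrt_zero, zero_add, log_sqrt (sub_pos.2 hab).le]
  ring

section EllipticIntegrand

variable {a b t : ℝ}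

theorem measurable_one_div_sqrt_mul_sub_mul_sub :
    Measurable fun t => 1 / √(t * (a - t) * (b - t)) := by
  fun_prop

theorem one_div_sqrt_mul_sub_mul_sub_le_of_le_half (hab : a ≤ b) (ht₀ : 0 < t)
    (ht : t ≤ a / 2) :
    1 / √(t * (a - t) * (b - t)) ≤ 2 / a * (1 / √t) := by
  have hsq : a / 2 ≤ √((a - t) * (b - t)) :=
    (le_sqrt (by linarith) (by nlinarith)).2 (by nlinarith)
  have hst := sqrt_pos.2 ht₀
  calc 1 / √(t * (a - t) * (b - t)) = 1 / (√t * √((a - t) * (b - t))) := by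
        rw [mul_assoc, sqrt_mul ht₀.le]
    _ ≤ 1 / (√t * (a / 2)) :=
        one_div_le_one_div_of_le (by nlinarith) (mul_le_mul_of_nonneg_left hsq hst.le)
    _ = 2 / a * (1 / √t) := by field_simp

theorem one_div_sqrt_mul_sub_mul_sub_le_of_half_le (ha : 0 < a) (ht : a / 2 ≤ t) :
    1 / √(t * (a - t) * (b - t)) ≤ √(2 / a) * (1 / √((a - t) * (b - t))) := by
  have ht₀ : 0 < t := by linarith
  have hinv : 1 / √t ≤ √(2 / a) := by
    rw [← sqrt_one, ← sqrt_div' 1 ht₀.le]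
    exact sqrt_le_sqrt <| by rw [div_le_div_iff₀ ht₀ ha]; linarith
  rw [mul_assoc, sqrt_mul ht₀.le, ← one_div_mul_one_div]
  exact mul_le_mul_of_nonneg_right hinv (by positivity)

theorem integral_one_div_sqrt_mul_sub_mul_sub_le_of_le_half (ha : 0 < a) (hab : a ≤ b) :
    IntervalIntegrable (fun t => 1 / √(t * (a - t) * (b - t))) volume 0 (a / 2) ∧
      ∫ t in 0..a / 2, 1 / √(t * (a - t) * (b - t)) ≤ 2 * √(2 / a) := by
  obtain ⟨hint, hval⟩ := integral_one_div_sqrt (c := a / 2) (by positivity)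
  have hbound : ∀ t ∈ Ioo 0 (a / 2), 1 / √(t * (a - t) * (b - t)) ≤ 2 / a * (1 / √t) :=
    fun t ht => one_div_sqrt_mul_sub_mul_sub_le_of_le_half hab ht.1 ht.2.le
  have hint' := IntervalIntegrable.of_nonneg_of_le_Ioo (by positivity)
    measurable_one_div_sqrt_mul_sub_mul_sub (hint.const_mul (2 / a))
    (fun t _ => by positivity) hbound
  refine ⟨hint', (integral_mono_on_of_le_Ioo (by positivity) hint' (hint.const_mul _)
    hbound).trans_eq ?_⟩
  rw [intervalIntegral.integral_const_mul, hval]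
  calc 2 / a * (2 * √(a / 2)) = 2 * (√(a / 2) / (a / 2)) := by ring
    _ = 2 * √(2 / a) := by rw [sqrt_div_self, ← sqrt_inv, inv_div]

theorem integral_one_div_sqrt_mul_sub_mul_sub_le_of_half_le (ha : 0 < a) (hab : a < b) :
    IntervalIntegrable (fun t => 1 / √(t * (a - t) * (b - t))) volume (a / 2) a ∧
      ∫ t in a / 2..a, 1 / √(t * (a - t) * (b - t)) ≤
        √(2 / a) * (log 2 + log (b / (b - a))) := by
  obtain ⟨hint, hval⟩ := integral_one_div_sqrt_sub_mul_sub (c := a / 2) (by linarith) hab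
  have hbound : ∀ t ∈ Ioo (a / 2) a,
      1 / √(t * (a - t) * (b - t)) ≤ √(2 / a) * (1 / √((a - t) * (b - t))) :=
    fun t ht => one_div_sqrt_mul_sub_mul_sub_le_of_half_le ha ht.1.le
  have hint' := IntervalIntegrable.of_nonneg_of_le_Ioo (by linarith)
    measurable_one_div_sqrt_mul_sub_mul_sub (hint.const_mul _) (fun t _ => by positivity) hbound
  refine ⟨hint', (integral_mono_on_of_le_Ioo (by linarith) hint' (hint.const_mul _) hbound).trans
    ?_⟩
  rw [intervalIntegral.integral_const_mul, hval]
  refine mul_le_mul_of_nonneg_left ?_ (sqrt_nonneg _)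
  have hsum : √(a - a / 2) + √(b - a / 2) ≤ √(2 * b) := by
    convert sqrt_add_sqrt_le_sqrt_two_mul (x := a - a / 2) (y := b - a / 2)
      (by linarith) (by linarith) using 2
    ring
  have hlog := log_le_log
    (add_pos_of_nonneg_of_pos (sqrt_nonneg _) (sqrt_pos.2 (by linarith))) hsum
  rw [log_sqrt (by linarith), log_mul two_ne_zero (by linarith)] at hlog
  rw [log_div (by linarith) (by linarith)]
  linarith

theorem integral_one_div_sqrt_mul_sub_mul_sub_le (ha : 0 < a) (hab : a < b) :
    ∫ t in 0..a, 1 / √(t * (a - t) * (b - t)) ≤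
      √(2 / a) * (2 + log 2 + log (b / (b - a))) := by
  obtain ⟨hint₁, hle₁⟩ := integral_one_div_sqrt_mul_sub_mul_sub_le_of_le_half ha hab.le
  obtain ⟨hint₂, hle₂⟩ := integral_one_div_sqrt_mul_sub_mul_sub_le_of_half_le ha hab
  rw [← integral_add_adjacent_intervals hint₁ hint₂]
  linarith

end EllipticIntegrand

/-- Elliptic-type integral estimate: if `β₀ < αk < βk` with `αk - β₀ > βk - αk`, then for
`x ∈ (αk, βk)`, `∫_{β₀}^{αk} dt/√((t-β₀)(αk-t)(βk-t))
  ≤ (2/√(x-β₀))·(2 + log 2 + log((βk-β₀)/(βk-αk)))`. -/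
theorem elliptic_integral_estimate_long_band (β₀ αk βk x : ℝ)
    (h1 : β₀ < αk) (h2 : αk < βk) (h3 : βk - αk < αk - β₀)
    (hx : x ∈ Set.Ioo αk βk) :
    ∫ t in β₀..αk, 1 / Real.sqrt ((t - β₀) * (αk - t) * (βk - t)) ≤
      (2 / Real.sqrt (x - β₀)) * (2 + Real.log 2 + Real.log ((βk - β₀) / (βk - αk))) := by
  set a := αk - β₀
  set b := βk - β₀
  have hshift : ∫ t in β₀..αk, 1 / √((t - β₀) * (αk - t) * (βk - t)) =
      ∫ t in 0..a, 1 / √(t * (a - t) * (b - t)) := by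
    rw [← sub_self β₀, ← integral_comp_sub_right]
    congr! 4 with t
    ring
  have hx₀ : 0 < x - β₀ := by linarith [hx.1]
  have hsqrt : √(2 / a) ≤ 2 / √(x - β₀) := by
    rw [le_div_iff₀ (sqrt_pos.2 hx₀), ← sqrt_mul (by positivity), sqrt_le_left zero_le_two,
      div_mul_eq_mul_div, div_le_iff₀ (by positivity)]
    linarith [hx.2]
  have hlog : 0 ≤ log (b / (b - a)) :=
    log_nonneg <| (one_le_div (by linarith)).2 (by linarith)
  rw [hshift, show βk - αk = b - a by ring]
  refine (integral_one_div_sqrt_mul_sub_mul_sub_le (by linarith) (by linarith)).trans ?_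
  exact mul_le_mul_of_nonneg_right hsqrt (by linarith [log_nonneg one_le_two])
end

section
/- Let {εⱼ} ⊂ (0,1) with c := inf_{j≥1}(1−εⱼ)(1−εⱼ₊₁) > 0, and define bⱼ, gⱼ as in the infinite band construction (b₀ = α₀−β₀, bⱼ = (1−εⱼ)bⱼ₋₁/2, gⱼ = εⱼbⱼ₋₁), with gap endpoints αⱼ = β₀ + bⱼ and βⱼ = αⱼ + gⱼ. Then for any γⱼ ∈ [αⱼ,βⱼ] and any x ≤ β_k, the finite product ∏_{j=1}^{k−1} |x−γⱼ|/√(|x−αⱼ||x−βⱼ|) ≤ exp((2/c)·Σ_{j=1}^{k−1} εⱼ). -/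
open Finset

/-!
Each factor is at most `√((Bⱼ - x)/(Aⱼ - x)) = √(1 + gⱼ/(Aⱼ - x))`. For `j < k` the point `x ≤ Bₖ`
lies left of `Bⱼ₊₁`, and the gap between `Bⱼ₊₁` and `Aⱼ` has length exactly `bⱼ₊₁`, so the ratio is
at most `gⱼ/bⱼ₊₁ = 4εⱼ/((1-εⱼ)(1-εⱼ₊₁)) ≤ 4εⱼ/c`; finally `√(1 + t) ≤ exp (t/2)`.
-/

theorem Real.sqrt_one_add_le_exp_half (t : ℝ) : √(1 + t) ≤ Real.exp (t / 2) := by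
  calc √(1 + t) ≤ √(Real.exp t) := Real.sqrt_le_sqrt (by linarith [Real.add_one_le_exp t])
    _ = Real.exp (t / 2) := (Real.exp_half t).symm

theorem abs_sub_div_sqrt_le_exp {x a b γ d : ℝ} (hd : 0 < d) (hdx : d ≤ a - x)
    (hγ : γ ∈ Set.Icc a b) :
    |x - γ| / √(|x - a| * |x - b|) ≤ Real.exp ((b - a) / (2 * d)) := by
  obtain ⟨haγ, hγb⟩ := hγ
  have hax : 0 < a - x := hd.trans_le hdx
  have hbx : 0 < b - x := by linarith
  rw [abs_sub_comm, abs_of_pos (by linarith), abs_sub_comm, abs_of_pos hax, abs_sub_comm,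
    abs_of_pos hbx]
  have hsqrt : (b - x) / √((a - x) * (b - x)) = √(1 + (b - a) / (a - x)) := by
    have h : 1 + (b - a) / (a - x) = (b - x) / (a - x) := by field_simp; ring
    rw [h, Real.sqrt_div hbx.le, Real.sqrt_mul hax.le,
      div_eq_div_iff (by positivity) (by positivity), mul_comm √(a - x), ← mul_assoc,
      Real.mul_self_sqrt hbx.le]
  calc (γ - x) / √((a - x) * (b - x)) ≤ (b - x) / √((a - x) * (b - x)) := by
        gcongr
    _ = √(1 + (b - a) / (a - x)) := hsqrt
    _ ≤ Real.exp ((b - a) / (a - x) / 2) := Real.sqrt_one_add_le_exp_half _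
    _ ≤ Real.exp ((b - a) / (2 * d)) := by
        rw [div_div, mul_comm (a - x)]
        gcongr
        linarith

namespace InfiniteBand

variable {ε b g A B : ℕ → ℝ}

theorem b_pos (hb0 : 0 < b 0) (hε : ∀ j, ε j < 1)
    (hb : ∀ j, 1 ≤ j → b j = (1 - ε j) / 2 * b (j - 1)) (j : ℕ) : 0 < b j := by
  induction j with
  | zero => exact hb0
  | succ n ih =>
    rw [hb (n + 1) n.succ_pos, Nat.add_sub_cancel]
    have := hε (n + 1)
    exact mul_pos (by linarith) ih

theorem A_sub_B_succ (hb : ∀ j, 1 ≤ j → b j = (1 - ε j) / 2 * b (j - 1))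
    (hg : ∀ j, 1 ≤ j → g j = ε j * b (j - 1)) {β₀ : ℝ} (hA : ∀ j, 1 ≤ j → A j = β₀ + b j)
    (hB : ∀ j, 1 ≤ j → B j = A j + g j) {j : ℕ} (hj : 1 ≤ j) :
    A j - B (j + 1) = b (j + 1) := by
  rw [hB (j + 1) j.succ_pos, hA (j + 1) j.succ_pos, hA j hj, hg (j + 1) j.succ_pos,
    hb (j + 1) j.succ_pos, Nat.add_sub_cancel]
  ring

theorem B_antitone (hb0 : 0 < b 0) (hε : ∀ j, ε j ∈ Set.Ioo (0 : ℝ) 1)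
    (hb : ∀ j, 1 ≤ j → b j = (1 - ε j) / 2 * b (j - 1))
    (hg : ∀ j, 1 ≤ j → g j = ε j * b (j - 1)) {β₀ : ℝ} (hA : ∀ j, 1 ≤ j → A j = β₀ + b j)
    (hB : ∀ j, 1 ≤ j → B j = A j + g j) {m n : ℕ} (hm : 1 ≤ m) (hmn : m ≤ n) : B n ≤ B m := by
  have hbpos := b_pos hb0 (fun j ↦ (hε j).2) hb
  induction n, hmn using Nat.le_induction with
  | base => rfl
  | succ n hmn ih =>
    have hn : 1 ≤ n := hm.trans hmn
    have hgap := A_sub_B_succ hb hg hA hB hn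
    have hgn : 0 ≤ g n := hg n hn ▸ (mul_pos (hε n).1 (hbpos (n - 1))).le
    linarith [hB n hn, hbpos (n + 1)]

theorem g_div_b_succ_le {c : ℝ} (hc0 : 0 < c) (hε : ∀ j, ε j ∈ Set.Ioo (0 : ℝ) 1)
    (hb : ∀ j, 1 ≤ j → b j = (1 - ε j) / 2 * b (j - 1))
    (hg : ∀ j, 1 ≤ j → g j = ε j * b (j - 1)) (hb_pos : ∀ j, 0 < b j) {j : ℕ} (hj : 1 ≤ j)
    (hc : c ≤ (1 - ε j) * (1 - ε (j + 1))) :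
    g j / b (j + 1) ≤ 4 * ε j / c := by
  have hbj : b (j + 1) = (1 - ε j) * (1 - ε (j + 1)) / 4 * b (j - 1) := by
    rw [hb (j + 1) j.succ_pos, Nat.add_sub_cancel, hb j hj]
    ring
  have hbm := hb_pos (j - 1)
  have hprod : 0 < (1 - ε j) * (1 - ε (j + 1)) :=
    mul_pos (by linarith [(hε j).2]) (by linarith [(hε (j + 1)).2])
  rw [hg j hj, hbj, div_le_div_iff₀ (by positivity) hc0]
  nlinarith [mul_pos (hε j).1 hbm]

theorem c_le_one_sub_mul_one_sub (hε : ∀ j, ε j < 1) {c : ℝ}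
    (hc : c = ⨅ i : ℕ, (1 - ε (i + 1)) * (1 - ε (i + 2))) {j : ℕ} (hj : 1 ≤ j) :
    c ≤ (1 - ε j) * (1 - ε (j + 1)) := by
  have hbdd : BddBelow (Set.range fun i : ℕ ↦ (1 - ε (i + 1)) * (1 - ε (i + 2))) := by
    refine ⟨0, ?_⟩
    rintro _ ⟨i, rfl⟩
    exact mul_nonneg (by linarith [hε (i + 1)]) (by linarith [hε (i + 2)])
  have := ciInf_le hbdd (j - 1)
  rwa [← hc, Nat.sub_add_cancel hj, show j - 1 + 2 = j + 1 by omega] at this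

theorem factor_le_exp (hb0 : 0 < b 0) (hε : ∀ j, ε j ∈ Set.Ioo (0 : ℝ) 1)
    (hb : ∀ j, 1 ≤ j → b j = (1 - ε j) / 2 * b (j - 1))
    (hg : ∀ j, 1 ≤ j → g j = ε j * b (j - 1)) {β₀ : ℝ} (hA : ∀ j, 1 ≤ j → A j = β₀ + b j)
    (hB : ∀ j, 1 ≤ j → B j = A j + g j) {γ : ℕ → ℝ}
    (hγ : ∀ j, 1 ≤ j → γ j ∈ Set.Icc (A j) (B j))
    {c : ℝ} (hc : c = ⨅ i : ℕ, (1 - ε (i + 1)) * (1 - ε (i + 2))) (hc0 : 0 < c)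
    {j k : ℕ} (hj : 1 ≤ j) (hjk : j < k) {x : ℝ} (hx : x ≤ B k) :
    |x - γ j| / √(|x - A j| * |x - B j|) ≤ Real.exp (2 / c * ε j) := by
  have hbpos := b_pos hb0 (fun j ↦ (hε j).2) hb
  have hxB : x ≤ B (j + 1) := hx.trans (B_antitone hb0 hε hb hg hA hB (by omega) hjk)
  have hratio : g j / b (j + 1) ≤ 4 * ε j / c :=
    g_div_b_succ_le hc0 hε hb hg hbpos hj (c_le_one_sub_mul_one_sub (fun j ↦ (hε j).2) hc hj)
  calc |x - γ j| / √(|x - A j| * |x - B j|) ≤ Real.exp ((B j - A j) / (2 * b (j + 1))) :=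
        abs_sub_div_sqrt_le_exp (hbpos (j + 1)) (by linarith [A_sub_B_succ hb hg hA hB hj])
          (hγ j hj)
    _ ≤ Real.exp (2 / c * ε j) := by
        rw [hB j hj, add_sub_cancel_left]
        gcongr
        calc g j / (2 * b (j + 1)) = g j / b (j + 1) / 2 := by ring
          _ ≤ 4 * ε j / c / 2 := by linarith
          _ = 2 / c * ε j := by ring

end InfiniteBand

open InfiniteBand in
/-- Blaschke-type product estimate for the infinite band set: with bands/gaps defined by
`b₀ = α₀−β₀`, `bⱼ = (1−εⱼ)bⱼ₋₁/2`, `gⱼ = εⱼbⱼ₋₁` and gap endpoints `Aⱼ = β₀ + bⱼ`,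
`Bⱼ = Aⱼ + gⱼ`, if `c := inf_{j≥1}(1−εⱼ)(1−εⱼ₊₁) > 0`, then for any `γⱼ ∈ [Aⱼ, Bⱼ]` and any
`x ≤ Bₖ`, `∏_{j=1}^{k−1} |x−γⱼ|/√(|x−Aⱼ||x−Bⱼ|) ≤ exp((2/c)·Σ_{j=1}^{k−1} εⱼ)`. -/
theorem infinite_band_product_estimate (α₀ β₀ : ℝ) (ε b g A B γ : ℕ → ℝ) (c : ℝ)
    (hL : 0 < α₀ - β₀)
    (hε : ∀ j, ε j ∈ Set.Ioo (0 : ℝ) 1)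
    (hb0 : b 0 = α₀ - β₀)
    (hb : ∀ j, 1 ≤ j → b j = (1 - ε j) / 2 * b (j - 1))
    (hg : ∀ j, 1 ≤ j → g j = ε j * b (j - 1))
    (hA : ∀ j, 1 ≤ j → A j = β₀ + b j)
    (hB : ∀ j, 1 ≤ j → B j = A j + g j)
    (hγ : ∀ j, 1 ≤ j → γ j ∈ Set.Icc (A j) (B j))
    (hc : c = ⨅ j : ℕ, (1 - ε (j + 1)) * (1 - ε (j + 2)))
    (hc0 : 0 < c) :
    ∀ k : ℕ, 1 ≤ k → ∀ x : ℝ, x ≤ B k →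
      ∏ j ∈ Finset.Icc 1 (k - 1), |x - γ j| / Real.sqrt (|x - A j| * |x - B j|) ≤
        Real.exp (2 / c * ∑ j ∈ Finset.Icc 1 (k - 1), ε j) := by
  intro k _ x hx
  calc ∏ j ∈ Icc 1 (k - 1), |x - γ j| / √(|x - A j| * |x - B j|)
      ≤ ∏ j ∈ Icc 1 (k - 1), Real.exp (2 / c * ε j) := by
        refine prod_le_prod (fun _ _ ↦ by positivity) fun j hj ↦ ?_
        obtain ⟨hj1, hjk⟩ := mem_Icc.mp hj
        exact factor_le_exp (hb0 ▸ hL) hε hb hg hA hB hγ hc hc0 hj1 (by omega) hx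
    _ = Real.exp (2 / c * ∑ j ∈ Icc 1 (k - 1), ε j) := by rw [← Real.exp_sum, mul_sum]
end
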